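/- Accountable TTP behavior satisfies the TTP objective (finite-trace combinatorial version): Let a TTP response sequence be accountable as defined (first non-idle move a pair ⟨x,y⟩, all later moves in {idle, x, y, ⟨x,y⟩}), and define the derived predicates on the sequence: AB_O holds iff some move equals a₂^O or abPair; AB_R iff some move equals a₂^R or abPair; SIG_O iff some move equals r₂^R or resPair (O's signature sent to R); SIG_R iff some move equals r₂^O or resPair. Then it is impossible that (AB_O ∨ AB_R) ∧ (SIG_O ∨ SIG_R): the TTP never sends both an abort token and a signature. -/
import Mathlib


/-- The moves of the trusted third party. -/
inductive Move where
  | idle : Move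
  | aO : Move          -- a₂^O
  | aR : Move          -- a₂^R
  | abPair : Move      -- ⟨a₂^O, a₂^R⟩
  | rO : Move          -- r₂^O
  | rR : Move          -- r₂^R
  | resPair : Move     -- ⟨r₂^O, r₂^R⟩
deriving DecidableEq

/-- The moveClosure set `{idle, x, y, ⟨x, y⟩}` associated with a pair move;
non-pair moves impose no constraint. -/
def moveClosure : Move → Set Move
  | Move.abPair => {Move.idle, Move.aO, Move.aR, Move.abPair}
  | Move.resPair => {Move.idle, Move.rO, Move.rR, Move.resPair}
  | _ => Set.univ

/-- A response sequence is accountable if whenever its first non-idle move is a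
pair `⟨x, y⟩`, every subsequent move lies in `{idle, x, y, ⟨x, y⟩}`. -/
def Accountable (l : List Move) : Prop :=
  ∀ pre x suf, l = pre ++ x :: suf → (∀ m ∈ pre, m = Move.idle) →
    x ≠ Move.idle → ∀ m ∈ suf, m ∈ moveClosure x

/-- An accountable TTP whose first non-idle move is one of the pair moves
never sends both an abort token and a signature. -/
theorem accountable_no_mixed_tokens (l : List Move)
    (hacc : Accountable l)
    (hfirst :
      (∃ pre suf, l = pre ++ Move.abPair :: suf ∧ ∀ m ∈ pre, m = Move.idle) ∨
      (∃ pre suf, l = pre ++ Move.resPair :: suf ∧ ∀ m ∈ pre, m = Move.idle)) :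
    ¬ (((Move.aO ∈ l ∨ Move.abPair ∈ l) ∨ (Move.aR ∈ l ∨ Move.abPair ∈ l)) ∧
       ((Move.rR ∈ l ∨ Move.resPair ∈ l) ∨
        (Move.rO ∈ l ∨ Move.resPair ∈ l))) := by
  have key : ∀ x pre suf, l = pre ++ x :: suf → (∀ m ∈ pre, m = Move.idle) →
      x ≠ Move.idle → ∀ m ∈ l, m ∈ moveClosure x := by
    intro x pre suf hl hpre hx m hm
    rw [hl] at hm
    rcases List.mem_append.1 hm with h | h
    · have := hpre m h
      subst this
      cases x <;> simp [moveClosure]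
    · rcases List.mem_cons.1 h with h | h
      · subst h; cases m <;> simp [moveClosure] at hx ⊢
      · exact hacc pre x suf hl hpre hx m h
  rintro ⟨hab, hsig⟩
  rcases hfirst with ⟨pre, suf, hl, hpre⟩ | ⟨pre, suf, hl, hpre⟩
  · have hk := key Move.abPair pre suf hl hpre (by simp)
    rcases hsig with (h | h) | (h | h) <;> have := hk _ h <;>
      simp [moveClosure] at this
  · have hk := key Move.resPair pre suf hl hpre (by simp)
    rcases hab with (h | h) | (h | h) <;> have := hk _ h <;>
      simp [moveClosure] at this
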